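/- arXiv:2209.14094 — 2 statements merged into one kernel-verified Lean document; each statement's English description precedes it below -/
import Mathlib

section
/- In a finite directed acyclic graph, contracting an edge (u, v) (identifying u and v into a single vertex and removing the edge) yields an acyclic graph if and only if the only directed path from u to v in the original graph is the edge (u, v) itself. -/
/-!
If `u → z ⇝ v` is a second path, then `u → z ⇝ v` survives the contraction (the path from `z`
cannot use the edge `(u, v)`, since `u` is not reachable from `z`) and closes into a cycle at the
merged vertex. Conversely, a cycle in the contraction either avoids the merged vertex, and is then a
cycle of the original graph, or passes through it. In the latter case it leaves the merged vertex
along an edge `u → z` with `z ≠ v` or `v → z`, and every vertex from which the merged vertex is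
reachable in the contraction reaches `v` in the original graph; so `z ⇝ v`, giving either a second
path from `u` to `v` or a cycle through `v`.
-/

open Relation

section EdgeContraction

variable {V : Type*} [DecidableEq V] (E : V → V → Prop) (u v : V)

def glue (x : V) : V := if x = v then u else x

def contractEdge (a b : V) : Prop :=
  ∃ a' b', E a' b' ∧ ¬ (a' = u ∧ b' = v) ∧ glue u v a' = a ∧ glue u v b' = b

variable {E u v}

theorem glue_of_ne {x : V} (hx : x ≠ v) : glue u v x = x := if_neg hx

theorem glue_eq_left_iff {x : V} : glue u v x = u ↔ x = u ∨ x = v := by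
  unfold glue
  split_ifs with hx <;> simp [hx]

theorem eq_of_glue_eq {x a : V} (h : glue u v x = a) (ha : a ≠ u) : x = a := by
  unfold glue at h
  split_ifs at h
  exacts [absurd h.symm ha, h]

theorem reflTransGen_glue_left_iff (huv : E u v) {x : V} :
    ReflTransGen E (glue u v x) v ↔ ReflTransGen E x v := by
  unfold glue
  split_ifs with hx
  · exact ⟨fun _ => hx ▸ ReflTransGen.refl, fun _ => ReflTransGen.single huv⟩
  · rfl

theorem rel_of_contractEdge {a b : V} (h : contractEdge E u v a b) (ha : a ≠ u) (hb : b ≠ u) :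
    E a b := by
  obtain ⟨a', b', hE, -, rfl, rfl⟩ := h
  rwa [eq_of_glue_eq rfl ha, eq_of_glue_eq rfl hb] at hE

-- Such a path never uses the edge `(u, v)`.
theorem reflTransGen_contractEdge_glue {x y : V} (hxu : ¬ ReflTransGen E x u)
    (h : ReflTransGen E x y) : ReflTransGen (contractEdge E u v) (glue u v x) (glue u v y) := by
  induction h using ReflTransGen.head_induction_on with
  | refl => exact ReflTransGen.refl
  | head hxp _ ih =>
    rename_i x p _
    have hxu' : x ≠ u := fun h => hxu (h ▸ ReflTransGen.refl)
    exact ReflTransGen.head ⟨x, p, hxp, fun h => hxu' h.1, rfl, rfl⟩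
      (ih fun hpu => hxu (ReflTransGen.head hxp hpu))

theorem transGen_contractEdge_of_bypass (hacyc : ∀ a, ¬ TransGen E a a) {z : V} (huz : E u z)
    (hzv : z ≠ v) (hz : ReflTransGen E z v) : TransGen (contractEdge E u v) u u := by
  have hzu : ¬ ReflTransGen E z u := fun h => hacyc u (TransGen.head' huz h)
  have huv : u ≠ v := by
    rintro rfl
    exact hzu hz
  have hstep : contractEdge E u v u z :=
    ⟨u, z, huz, fun h => hzv h.2, glue_of_ne huv, glue_of_ne hzv⟩
  have hpath := reflTransGen_contractEdge_glue (v := v) hzu hz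
  rw [glue_of_ne hzv, glue, if_pos rfl] at hpath
  exact TransGen.head' hstep hpath

theorem reflTransGen_of_reflTransGen_contractEdge (huv : E u v) {b : V}
    (h : ReflTransGen (contractEdge E u v) b u) : ReflTransGen E b v := by
  induction h using ReflTransGen.head_induction_on with
  | refl => exact ReflTransGen.single huv
  | head hbc _ ih =>
    obtain ⟨b', c', hE, -, rfl, rfl⟩ := hbc
    rw [reflTransGen_glue_left_iff huv] at ih ⊢
    exact ReflTransGen.head hE ih

theorem not_transGen_contractEdge_self (huv : E u v) (hacyc : ∀ a, ¬ TransGen E a a)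
    (hbypass : ∀ z, E u z → z ≠ v → ¬ ReflTransGen E z v) :
    ¬ TransGen (contractEdge E u v) u u := by
  rw [TransGen.head'_iff]
  rintro ⟨_, ⟨a', b', hE, hne, ha', rfl⟩, hback⟩
  have hb' : ReflTransGen E b' v :=
    (reflTransGen_glue_left_iff huv).mp (reflTransGen_of_reflTransGen_contractEdge huv hback)
  rcases glue_eq_left_iff.mp ha' with rfl | rfl
  · exact hbypass b' hE (fun h => hne ⟨rfl, h⟩) hb'
  · exact hacyc a' (TransGen.head' hE hb')

theorem transGen_or_through_of_transGen_contractEdge {a b : V}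
    (h : TransGen (contractEdge E u v) a b) :
    TransGen E a b ∨
      (ReflTransGen (contractEdge E u v) a u ∧ ReflTransGen (contractEdge E u v) u b) := by
  induction h with
  | @single c hac =>
    by_cases ha : a = u
    · subst ha
      exact Or.inr ⟨ReflTransGen.refl, ReflTransGen.single hac⟩
    by_cases hc : c = u
    · subst hc
      exact Or.inr ⟨ReflTransGen.single hac, ReflTransGen.refl⟩
    exact Or.inl (TransGen.single (rel_of_contractEdge hac ha hc))
  | @tail c d hac hcd ih =>
    by_cases hd : d = u
    · subst hd
      exact Or.inr ⟨(hac.tail hcd).to_reflTransGen, ReflTransGen.refl⟩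
    rcases ih with hE | ⟨hau, huc⟩
    · by_cases hc : c = u
      · subst hc
        exact Or.inr ⟨hac.to_reflTransGen, ReflTransGen.single hcd⟩
      exact Or.inl (hE.tail (rel_of_contractEdge hcd hc hd))
    · exact Or.inr ⟨hau, huc.tail hcd⟩

end EdgeContraction

theorem stmt4_general {V : Type*} [DecidableEq V] (E : V → V → Prop) (u v : V)
    (huv : E u v) (hacyc : ∀ a : V, ¬ Relation.TransGen E a a) :
    (∀ a : V, ¬ Relation.TransGen
        (fun a b => ∃ a' b', E a' b' ∧ ¬ (a' = u ∧ b' = v) ∧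
          (if a' = v then u else a') = a ∧ (if b' = v then u else b') = b) a a) ↔
    (∀ z, E u z → z ≠ v → ¬ Relation.ReflTransGen E z v) := by
  change (∀ a, ¬ TransGen (contractEdge E u v) a a) ↔ _
  constructor
  · intro hC z huz hzv hz
    exact hC u (transGen_contractEdge_of_bypass hacyc huz hzv hz)
  · intro hbypass a hcycle
    rcases transGen_or_through_of_transGen_contractEdge hcycle with hE | ⟨hau, hua⟩
    · exact hacyc a hE
    · exact not_transGen_contractEdge_self huv hacyc hbypass
        ((TransGen.trans_right hua hcycle).trans_left hau)

/-- Contracting the edge (u,v) of a finite DAG (identifying v with u and removing the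
edge) yields an acyclic graph if and only if the only directed path from u to v is the
edge (u,v) itself. -/
theorem stmt4 {V : Type*} [Fintype V] [DecidableEq V] (E : V → V → Prop) (u v : V)
    (huv : E u v) (hacyc : ∀ a : V, ¬ Relation.TransGen E a a) :
    (∀ a : V, ¬ Relation.TransGen
        (fun a b => ∃ a' b', E a' b' ∧ ¬ (a' = u ∧ b' = v) ∧
          (if a' = v then u else a') = a ∧ (if b' = v then u else b') = b) a a) ↔
    (∀ z, E u z → z ≠ v → ¬ Relation.ReflTransGen E z v) :=
  stmt4_general E u v huv hacyc
end

section
/- Let G be a finite connected undirected planar graph with a combinatorial embedding, and let w be an articulation point of G. Then w is incident to at least two corners belonging to the same face of the embedding. -/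
/-!
Suppose every face meets `w` in at most one corner. Walking once around the face through a
corner `(ρ⁻¹ d, d)` at `w` then leaves `w` along `d` and returns only along the reversal of
`ρ⁻¹ d`, so it joins the neighbours `d.snd` and `(ρ⁻¹ d).snd` of `w` in `G - w`. Since `ρ`
is cyclic at `w`, all neighbours of `w` lie in one component of `G - w`; as `G` is connected,
every other vertex reaches some neighbour of `w` without passing through `w`, so `w` is not
an articulation point.

`G - w` is modelled as `G.deleteIncidenceSet w`, which keeps `w` as an isolated vertex.
-/

/-- Reversal of darts, as a permutation. -/
def dartSymmEquiv {V : Type*} (G : SimpleGraph V) : Equiv.Perm G.Dart where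
  toFun := SimpleGraph.Dart.symm
  invFun := SimpleGraph.Dart.symm
  left_inv d := SimpleGraph.Dart.symm_symm d
  right_inv d := SimpleGraph.Dart.symm_symm d

/-- The face permutation of a rotation system `ρ`: the successor of a dart `d` is the
rotation image of the reversed dart, `ρ d.symm`.  Faces of the embedding are the orbits
of this permutation; each dart `d` represents the corner of its containing face at the
vertex `d.toProd.1`. -/
def facePerm {V : Type*} (G : SimpleGraph V) (ρ : Equiv.Perm G.Dart) :
    Equiv.Perm G.Dart :=
  (dartSymmEquiv G).trans ρ

/-- The setoid of darts in the same face (orbit of the face permutation). -/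
def faceSetoid {V : Type*} (G : SimpleGraph V) (ρ : Equiv.Perm G.Dart) :
    Setoid G.Dart :=
  ⟨(facePerm G ρ).SameCycle,
    ⟨fun _ => Equiv.Perm.SameCycle.refl _ _,
     fun h => h.symm, fun h h' => h.trans h'⟩⟩

namespace SimpleGraph

variable {V : Type*} {G : SimpleGraph V} {w x y : V}

lemma Reachable.ne_of_deleteIncidenceSet (h : (G.deleteIncidenceSet w).Reachable x y)
    (hx : x ≠ w) : y ≠ w := by
  obtain ⟨p⟩ := h
  induction p with
  | nil => exact hx
  | cons hadj _ ih => exact ih (deleteIncidenceSet_adj.1 hadj).2.2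

lemma Reachable.induce_ne_of_deleteIncidenceSet (h : (G.deleteIncidenceSet w).Reachable x y)
    (hx : x ≠ w) (hy : y ≠ w) : (G.induce {v | v ≠ w}).Reachable ⟨x, hx⟩ ⟨y, hy⟩ := by
  obtain ⟨p⟩ := h
  have hp : ∀ v ∈ p.support, v ∈ {v | v ≠ w} := fun v hv => by
    obtain ⟨q, _, _⟩ := p.mem_support_iff_exists_append.1 hv
    exact q.reachable.ne_of_deleteIncidenceSet hx
  rw [← G.induce_deleteIncidenceSet_of_notMem (s := {v | v ≠ w}) (x := w) (by simp)]
  exact (p.induce _ hp).reachable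

lemma Walk.exists_dart_reachable_deleteIncidenceSet (p : G.Walk x w) (hx : x ≠ w) :
    ∃ d : G.Dart, d.fst = w ∧ (G.deleteIncidenceSet w).Reachable x d.snd := by
  -- the dart along which `p` leaves the component of `x` in `G - w` must enter `w`
  obtain ⟨d, -, hreach, hnot⟩ :=
    p.exists_boundary_dart {v | (G.deleteIncidenceSet w).Reachable x v} Reachable.rfl
      (fun h => h.ne_of_deleteIncidenceSet hx rfl)
  have hfst : d.fst ≠ w := Reachable.ne_of_deleteIncidenceSet hreach hx
  have hsnd : d.snd = w := by
    by_contra hsnd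
    exact hnot (hreach.trans (deleteIncidenceSet_adj.2 ⟨d.adj, hfst, hsnd⟩).reachable)
  exact ⟨d.symm, hsnd, hreach⟩

section Rotation

variable (ρ : Equiv.Perm G.Dart) (hρ : ∀ d : G.Dart, (ρ d).fst = d.fst)
include hρ

lemma facePerm_apply_fst (d : G.Dart) : (facePerm G ρ d).fst = d.snd := hρ d.symm

lemma rotation_pow_apply_fst (n : ℕ) (d : G.Dart) : ((ρ ^ n) d).fst = d.fst := by
  induction n with
  | zero => rfl
  | succ n ih => rw [pow_succ', Equiv.Perm.mul_apply, hρ, ih]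

lemma reachable_fst_facePerm_pow (e : G.Dart) (k : ℕ)
    (h : ∀ i ≤ k, ((facePerm G ρ ^ i) e).fst ≠ w) :
    (G.deleteIncidenceSet w).Reachable e.fst ((facePerm G ρ ^ k) e).fst := by
  induction k with
  | zero => rfl
  | succ k ih =>
    refine (ih fun i hi => h i (by omega)).trans (Adj.reachable ?_)
    have hnext := h (k + 1) le_rfl
    rw [pow_succ', Equiv.Perm.mul_apply, facePerm_apply_fst ρ hρ] at hnext ⊢
    exact deleteIncidenceSet_adj.2 ⟨Dart.adj _, h k (by omega), hnext⟩

lemma reachable_snd_inv_of_unique_corner [Finite G.Dart] {d : G.Dart}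
    (hcorner : ∀ d', d'.fst = w → (facePerm G ρ).SameCycle d d' → d' = d) :
    (G.deleteIncidenceSet w).Reachable d.snd (ρ⁻¹ d).snd := by
  set F := facePerm G ρ
  set n := Function.minimalPeriod F d
  have hper : (F ^ n) d = d := by
    rw [Equiv.Perm.coe_pow]; exact Function.iterate_minimalPeriod
  have hpos : 0 < n :=
    Function.minimalPeriod_pos_of_mem_periodicPts (F.injective.mem_periodicPts d)
  have hmove : F d ≠ d := fun h => d.snd_ne_fst (by rw [← facePerm_apply_fst ρ hρ, h])
  have hone : n ≠ 1 := fun h => hmove (by simpa [h] using hper)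
  have hoff : ∀ i, 0 < i → i < n → ((F ^ i) d).fst ≠ w := fun i hi hin hw =>
    Function.not_isPeriodicPt_of_pos_of_lt_minimalPeriod hi.ne' hin <| by
      rw [Function.IsPeriodicPt, Function.IsFixedPt, ← Equiv.Perm.coe_pow]
      exact hcorner _ hw ⟨i, by simp⟩
  have hshift : ∀ i, (F ^ i) (F d) = (F ^ (i + 1)) d := fun i => by
    rw [pow_succ, Equiv.Perm.mul_apply]
  -- the boundary walk returns to `d` right after the reversal of `ρ⁻¹ d`
  have hlast : (F ^ (n - 2)) (F d) = (ρ⁻¹ d).symm := by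
    have hret : ρ ((F ^ (n - 2)) (F d)).symm = d := by
      change F _ = d
      rw [hshift, ← Equiv.Perm.mul_apply, ← pow_succ', show n - 2 + 1 + 1 = n by omega, hper]
    rw [← Equiv.Perm.eq_inv_iff_eq.2 hret, Dart.symm_symm]
  have hwalk := reachable_fst_facePerm_pow ρ hρ (F d) (n - 2) fun i hi => by
    rw [hshift]; exact hoff (i + 1) (by omega) (by omega)
  rwa [hlast, facePerm_apply_fst ρ hρ] at hwalk

lemma reachable_snd_of_unique_corners [Finite G.Dart]
    (hcyc : ∀ d d' : G.Dart, d.fst = d'.fst → ∃ n : ℕ, (ρ ^ n) d = d')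
    (hcorner : ∀ d d' : G.Dart, d.fst = w → d'.fst = w → (facePerm G ρ).SameCycle d d' → d = d')
    {d d' : G.Dart} (hd : d.fst = w) (hd' : d'.fst = w) :
    (G.deleteIncidenceSet w).Reachable d.snd d'.snd := by
  obtain ⟨n, rfl⟩ := hcyc d d' (hd.trans hd'.symm)
  induction n with
  | zero => rfl
  | succ n ih =>
    have hn : ((ρ ^ n) d).fst = w := (rotation_pow_apply_fst ρ hρ n d).trans hd
    have hstep := reachable_snd_inv_of_unique_corner ρ hρ (d := (ρ ^ (n + 1)) d)
      fun e he hsame => (hcorner _ _ hd' he hsame).symm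
    rw [pow_succ', Equiv.Perm.mul_apply] at hstep ⊢
    rw [Equiv.Perm.inv_eq_iff_eq.2 rfl] at hstep
    exact (ih hn).trans hstep.symm

end Rotation

end SimpleGraph

open SimpleGraph in
theorem stmt11_general {V : Type*} [Fintype V]
    (G : SimpleGraph V) (hconn : G.Connected)
    (ρ : Equiv.Perm G.Dart)
    (hρ : ∀ d : G.Dart, (ρ d).toProd.1 = d.toProd.1)
    (hcyc : ∀ d d' : G.Dart, d.toProd.1 = d'.toProd.1 → ∃ n : ℕ, (ρ ^ n) d = d')
    (w : V)
    (hart : ∃ a b : {x : V // x ≠ w},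
      ¬ (G.induce {x : V | x ≠ w}).Reachable ⟨a.1, a.2⟩ ⟨b.1, b.2⟩) :
    ∃ d d' : G.Dart, d ≠ d' ∧ d.toProd.1 = w ∧ d'.toProd.1 = w ∧
      (facePerm G ρ).SameCycle d d' := by
  classical
  by_contra! hcorner
  obtain ⟨a, b, hab⟩ := hart
  obtain ⟨da, hda, ha⟩ := (hconn a.1 w).some.exists_dart_reachable_deleteIncidenceSet a.2
  obtain ⟨db, hdb, hb⟩ := (hconn b.1 w).some.exists_dart_reachable_deleteIncidenceSet b.2
  have hab' := reachable_snd_of_unique_corners ρ hρ hcyc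
    (fun d d' hd hd' hsame => by_contra fun hne => hcorner d d' hne hd hd' hsame) hda hdb
  exact hab ((ha.trans (hab'.trans hb.symm)).induce_ne_of_deleteIncidenceSet a.2 b.2)

/-- In a finite connected planar graph with a combinatorial embedding (a rotation system
`ρ`, cyclic at each vertex, satisfying Euler's formula `|V| - |E| + |F| = 2`, here stated
as `2|V| - #darts + 2|F| = 4`), every articulation point `w` is incident to at least two
corners belonging to the same face of the embedding. -/
theorem stmt11 {V : Type*} [Fintype V] [DecidableEq V]
    (G : SimpleGraph V) [DecidableRel G.Adj] (hconn : G.Connected)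
    (ρ : Equiv.Perm G.Dart)
    (hρ : ∀ d : G.Dart, (ρ d).toProd.1 = d.toProd.1)
    (hcyc : ∀ d d' : G.Dart, d.toProd.1 = d'.toProd.1 → ∃ n : ℕ, (ρ ^ n) d = d')
    (heuler : (2 * Fintype.card V : ℤ) - Fintype.card G.Dart
        + 2 * Nat.card (Quotient (faceSetoid G ρ)) = 4)
    (w : V)
    (hart : ∃ a b : {x : V // x ≠ w},
      ¬ (G.induce {x : V | x ≠ w}).Reachable ⟨a.1, a.2⟩ ⟨b.1, b.2⟩) :
    ∃ d d' : G.Dart, d ≠ d' ∧ d.toProd.1 = w ∧ d'.toProd.1 = w ∧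
      (facePerm G ρ).SameCycle d d' :=
  stmt11_general G hconn ρ hρ hcyc w hart
end
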